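/- arXiv:2208.09186 — 2 statements merged into one kernel-verified Lean document; each statement's English description precedes it below -/
import Mathlib

section
/- Let P ∈ ℝ[X], let Q be a *ℝ-deformation of P, and set Ξ := Q − P ∈ ℝ*[X] (P viewed in ℝ*[X]). Let ξ ∈ ℝ* be a root of Q with standard part u := st ξ, and assume P(u) = 0, P'(u) ≠ 0 (so u is a simple root of P) and ξ ≠ u. Then the evaluation of Ξ at u is nonzero: Ξ(u) ≠ 0. -/
open Hyperreal Polynomial

/-- The coercion `ℝ → ℝ*` as a ring homomorphism. -/
noncomputable def realToHyper : ℝ →+* ℝ* :=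
  (Filter.Germ.coeRingHom _).comp (Pi.constRingHom ℕ ℝ)

/-!
Suppose `Ξ(u) = 0`. Then `Q(u) = P(u) = 0`, so dividing by `X - u` gives
`Q = (X - u) * (R + S)` with `R = P / (X - u)` real and `S = Ξ / (X - u)` having infinitesimal
coefficients. Since `ξ ≠ u`, the root `ξ` of `Q` is a root of `R + S`; taking standard parts,
`R(u) = 0`. But `R(u) = P'(u) ≠ 0`.
-/

theorem realToHyper_apply (r : ℝ) : realToHyper r = r := rfl

namespace Hyperreal

theorem IsSt.pow {x : ℝ*} {r : ℝ} (h : IsSt x r) : ∀ n : ℕ, IsSt (x ^ n) (r ^ n)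
  | 0 => by simpa using isSt_refl_real 1
  | n + 1 => by simpa only [pow_succ] using (h.pow n).mul h

theorem IsSt.sum {ι : Type*} (s : Finset ι) {x : ι → ℝ*} {r : ι → ℝ}
    (h : ∀ i ∈ s, IsSt (x i) (r i)) : IsSt (∑ i ∈ s, x i) (∑ i ∈ s, r i) := by
  classical
  induction s using Finset.induction_on with
  | empty => simpa using isSt_refl_real 0
  | insert i s hi ih =>
    rw [Finset.sum_insert hi, Finset.sum_insert hi]
    exact (h i (s.mem_insert_self i)).add (ih fun j hj => h j (Finset.mem_insert_of_mem hj))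

theorem isSt_eval_of_isSt_coeff {F : ℝ*[X]} {f : ℝ[X]} (hc : ∀ i, IsSt (F.coeff i) (f.coeff i))
    {x : ℝ*} {r : ℝ} (hx : IsSt x r) : IsSt (F.eval x) (f.eval r) := by
  set N := max F.natDegree f.natDegree + 1
  rw [eval_eq_sum_range' (n := N) (by omega), eval_eq_sum_range' (n := N) (by omega)]
  exact IsSt.sum _ fun i _ => (hc i).mul (hx.pow i)

theorem infinitesimal_coeff_divByMonic_X_sub_C {F : ℝ*[X]} (hF : ∀ i, Infinitesimal (F.coeff i))
    {a : ℝ*} {r : ℝ} (ha : IsSt a r) (n : ℕ) : Infinitesimal ((F /ₘ (X - C a)).coeff n) := by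
  rw [coeff_divByMonic_X_sub_C, Infinitesimal]
  simpa using IsSt.sum _ fun i _ => (ha.pow (i - (n + 1))).mul (hF i)

end Hyperreal

theorem Polynomial.eval_divByMonic_X_sub_C_self {K : Type*} [CommRing K] (f : K[X]) (a : K) :
    (f /ₘ (X - C a)).eval a = (derivative f).eval a := by
  simpa using congrArg (eval a) (divByMonic_add_X_sub_C_mul_derivative_divByMonic_eq_derivative f a)

theorem xi_eval_ne_zero_of_simple_root_general (P : Polynomial ℝ) (Q : Polynomial ℝ*)
    (hdef : ∀ i, Infinitesimal ((Q - P.map realToHyper).coeff i))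
    (ξ : ℝ*) (u : ℝ) (hst : IsSt ξ u) (hroot : Q.eval ξ = 0)
    (hu : P.eval u = 0) (hu' : (derivative P).eval u ≠ 0) (hne : ξ ≠ (u : ℝ*)) :
    (Q - P.map realToHyper).eval (u : ℝ*) ≠ 0 := by
  intro hΞu
  set R := P /ₘ (X - C u)
  set G := R.map realToHyper + (Q - P.map realToHyper) /ₘ (X - C (u : ℝ*))
  have hQ : Q = (X - C (u : ℝ*)) * G := by
    have hR : (X - C (u : ℝ*)) * R.map realToHyper = P.map realToHyper := by
      rw [← mul_divByMonic_eq_iff_isRoot.mpr hu, Polynomial.map_mul, Polynomial.map_sub, map_X,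
        map_C, realToHyper_apply]
    rw [mul_add, hR, mul_divByMonic_eq_iff_isRoot.mpr hΞu, add_sub_cancel]
  have hGξ : G.eval ξ = 0 := by
    rw [hQ, eval_mul, eval_sub, eval_X, eval_C] at hroot
    exact (mul_eq_zero.mp hroot).resolve_left (sub_ne_zero.mpr hne)
  have hGst : IsSt (G.eval ξ) (R.eval u) := by
    refine isSt_eval_of_isSt_coeff (fun i => ?_) hst
    simpa only [G, coeff_add, coeff_map, realToHyper_apply, add_zero] using
      (isSt_refl_real (R.coeff i)).add
        (infinitesimal_coeff_divByMonic_X_sub_C hdef (isSt_refl_real u) i)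
  have hRu : R.eval u = 0 := by
    rw [hGξ] at hGst
    exact ((isSt_refl_real 0).unique hGst).symm
  exact hu' (by rwa [← eval_divByMonic_X_sub_C_self])

/-- If `Q` is a `*ℝ`-deformation of `P`, `Ξ = Q - P`, `ξ` is a root of `Q` with
standard part `u`, `u` is a simple root of `P` and `ξ ≠ u`, then `Ξ(u) ≠ 0`. -/
theorem xi_eval_ne_zero_of_simple_root (P : Polynomial ℝ) (Q : Polynomial ℝ*)
    (hdeg : Q.natDegree = P.natDegree)
    (hdef : ∀ i, Infinitesimal ((Q - P.map realToHyper).coeff i))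
    (ξ : ℝ*) (u : ℝ) (hst : IsSt ξ u) (hroot : Q.eval ξ = 0)
    (hu : P.eval u = 0) (hu' : (derivative P).eval u ≠ 0) (hne : ξ ≠ (u : ℝ*)) :
    (Q - P.map realToHyper).eval (u : ℝ*) ≠ 0 :=
  xi_eval_ne_zero_of_simple_root_general P Q hdef ξ u hst hroot hu hu' hne
end

section
/- Let P₁, P₂ ∈ ℝ[X] be nonzero polynomials and let D = gcd(P₁, P₂) in ℝ[X]. Let Q₁, Q₂ ∈ ℝ*[X] be *ℝ-deformations of P₁ and P₂. Define the Euclidean remainder sequence r₀ := Q₁, r₁ := Q₂, and r_{j+2} := r_j mod r_{j+1} in ℝ*[X] (with r_{j+2} := 0 when r_{j+1} = 0). Suppose k is an index such that: every coefficient of r_{k+1} is infinitesimal; some coefficient of r_k is not infinitesimal; and for every j ≤ k, all coefficients of r_j are finite and the leading coefficient of r_j is not infinitesimal. Then the real polynomial °r_k whose i-th coefficient is st(coeff_i(r_k)) is a nonzero real scalar multiple of D; that is, the standard part of the PGCD of Q₁ and Q₂ is an associate of gcd(P₁, P₂). -/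
/-!
As long as every remainder `r_j` (`j ≤ k`) has finite coefficients and a non-infinitesimal leading
coefficient, each division step `r_j = r_{j+1} q_j + r_{j+2}` takes place among polynomials with
finite coefficients: the leading coefficient of `r_{j+1}` is a unit of the ring of finite
elements, so the quotient and remainder are finite too. Taking standard parts coefficientwise is
a ring homomorphism there, so `°r_j = °r_{j+1} °q_j + °r_{j+2}` in `ℝ[X]`. Hence every pair
`(°r_j, °r_{j+1})` has the same common divisors as `(°Q₁, °Q₂) = (P₁, P₂)`, and since
`°r_{k+1} = 0`, the polynomial `°r_k` is a gcd of `P₁` and `P₂`.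
-/
open Hyperreal Polynomial

open Classical in
/-- The Euclidean remainder sequence of `Q₁, Q₂ ∈ ℝ*[X]`:
`r₀ = Q₁`, `r₁ = Q₂`, `r_{j+2} = r_j mod r_{j+1}` (and `0` once the sequence hits `0`). -/
noncomputable def remSeq (Q₁ Q₂ : Polynomial ℝ*) : ℕ → Polynomial ℝ*
  | 0 => Q₁
  | 1 => Q₂
  | (j + 2) =>
      if remSeq Q₁ Q₂ (j + 1) = 0 then 0 else remSeq Q₁ Q₂ j % remSeq Q₁ Q₂ (j + 1)

open ArchimedeanClass

namespace Polynomial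

variable {R K : Type*} [Ring R] [Field K] {f : R →+* K} {p q : K[X]}

theorem div_mem_lifts (hp : p ∈ lifts f) (hq : q ∈ lifts f)
    (hlc : q.leadingCoeff⁻¹ ∈ Set.range f) : p / q ∈ lifts f := by
  obtain ⟨c, hc⟩ := hlc
  have hC : C q.leadingCoeff⁻¹ ∈ lifts f := hc ▸ C_mem_lifts f c
  rw [div_def]
  refine mul_mem hC ?_
  rcases eq_or_ne q 0 with rfl | hq0
  · simp
  obtain ⟨q', hq', -, hmonic⟩ :=
    lifts_and_degree_eq_and_monic (mul_mem hq hC) (monic_mul_leadingCoeff_inv hq0)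
  obtain ⟨p', rfl⟩ := (mem_lifts p).1 hp
  exact (mem_lifts _).2 ⟨p' /ₘ q', by rw [map_divByMonic f hmonic, hq']⟩

theorem mod_mem_lifts (hp : p ∈ lifts f) (hq : q ∈ lifts f)
    (hlc : q.leadingCoeff⁻¹ ∈ Set.range f) : p % q ∈ lifts f := by
  have hdiv := div_mem_lifts hp hq hlc
  rw [lifts_iff_liftsRing] at hp hq hdiv ⊢
  rw [EuclideanDomain.mod_eq_sub_mul_div]
  exact sub_mem hp (mul_mem hq hdiv)

theorem exists_ne_zero_eq_smul_of_associated (h : Associated p q) :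
    ∃ c : K, c ≠ 0 ∧ q = c • p := by
  obtain ⟨u, rfl⟩ := h
  obtain ⟨c, hc, hcu⟩ := Polynomial.isUnit_iff.1 (Units.isUnit u)
  exact ⟨c, hc.ne_zero, by rw [smul_eq_C_mul, hcu, mul_comm]⟩

end Polynomial

theorem dvd_and_dvd_iff_of_eq_mul_add {α : Type*} [Ring α] {a b c d t : α} (h : a = b * t + c) :
    d ∣ b ∧ d ∣ c ↔ d ∣ a ∧ d ∣ b := by
  subst h
  exact ⟨fun ⟨hb, hc⟩ => ⟨dvd_add (hb.mul_right t) hc, hb⟩,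
    fun ⟨ha, hb⟩ => ⟨hb, (dvd_add_right (hb.mul_right t)).1 ha⟩⟩

namespace ArchimedeanClass

variable {K : Type*} [LinearOrder K] [Field K] [IsOrderedRing K]

noncomputable def FiniteElement.val : FiniteElement K →+* K := ValuationSubring.subtype _

noncomputable def FiniteElement.stdPartHom : FiniteElement K →+* ℝ where
  toFun x := stdPart x.1
  map_zero' := stdPart_zero
  map_one' := stdPart_one
  map_add' x y := stdPart_add x.2 y.2
  map_mul' x y := stdPart_mul x.2 y.2

theorem FiniteElement.mem_range_val {x : K} : x ∈ Set.range (val (K := K)) ↔ 0 ≤ mk x :=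
  ⟨fun ⟨y, hy⟩ => hy ▸ y.2, fun h => ⟨.mk x h, rfl⟩⟩

theorem mem_lifts_val_iff {p : K[X]} :
    p ∈ lifts (FiniteElement.val (K := K)) ↔ ∀ n, 0 ≤ mk (p.coeff n) := by
  simp only [lifts_iff_coeff_lifts, FiniteElement.mem_range_val]

noncomputable def stdPartPoly (p : K[X]) : ℝ[X] :=
  ⟨⟨Finsupp.mapRange stdPart stdPart_zero p.toFinsupp.coeff⟩⟩

@[simp]
theorem coeff_stdPartPoly (p : K[X]) (n : ℕ) : (stdPartPoly p).coeff n = stdPart (p.coeff n) :=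
  rfl

theorem stdPartPoly_map_val (p : (FiniteElement K)[X]) :
    stdPartPoly (p.map FiniteElement.val) = p.map FiniteElement.stdPartHom := by
  ext n
  simp only [coeff_stdPartPoly, coeff_map]
  rfl

theorem stdPartPoly_eq_zero {p : K[X]} (h : ∀ n, 0 < mk (p.coeff n)) : stdPartPoly p = 0 := by
  ext n
  simpa using (h n).ne'

theorem stdPartPoly_eq_of_mk_sub_pos (f : ℝ →+*o K) {P : ℝ[X]} {Q : K[X]}
    (h : ∀ n, 0 < mk ((Q - P.map (f : ℝ →+* K)).coeff n)) : stdPartPoly Q = P := by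
  ext n
  have hn := h n
  rw [coeff_sub, coeff_map] at hn
  rw [coeff_stdPartPoly, ← add_sub_cancel ((f : ℝ →+* K) (P.coeff n)) (Q.coeff n),
    stdPart_add_eq_left hn]
  exact stdPart_map_real f _

theorem stdPartPoly_eq_mul_div_add_mod {p q : K[X]} (hp : ∀ n, 0 ≤ mk (p.coeff n))
    (hq : ∀ n, 0 ≤ mk (q.coeff n)) (hlc : mk q.leadingCoeff ≤ 0) :
    stdPartPoly p = stdPartPoly q * stdPartPoly (p / q) + stdPartPoly (p % q) := by
  have hlc' : q.leadingCoeff⁻¹ ∈ Set.range FiniteElement.val := by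
    rw [FiniteElement.mem_range_val, mk_inv, le_antisymm hlc (hq _), neg_zero]
  rw [← mem_lifts_val_iff] at hp hq
  obtain ⟨p', rfl⟩ := (mem_lifts _).1 hp
  obtain ⟨q', rfl⟩ := (mem_lifts _).1 hq
  obtain ⟨t, ht⟩ := (mem_lifts _).1 (div_mem_lifts hp hq hlc')
  obtain ⟨s, hs⟩ := (mem_lifts _).1 (mod_mem_lifts hp hq hlc')
  have hsplit : p'.map FiniteElement.val = (q' * t + s).map FiniteElement.val := by
    rw [Polynomial.map_add, Polynomial.map_mul, ht, hs, EuclideanDomain.div_add_mod]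
  rw [← ht, ← hs, hsplit, stdPartPoly_map_val, stdPartPoly_map_val, stdPartPoly_map_val,
    stdPartPoly_map_val, Polynomial.map_add, Polynomial.map_mul]

end ArchimedeanClass

theorem remSeq_add_two {Q₁ Q₂ : ℝ*[X]} {j : ℕ} (h : remSeq Q₁ Q₂ (j + 1) ≠ 0) :
    remSeq Q₁ Q₂ (j + 2) = remSeq Q₁ Q₂ j % remSeq Q₁ Q₂ (j + 1) := by
  rw [remSeq, if_neg h]

theorem dvd_stdPartPoly_remSeq_iff {Q₁ Q₂ : ℝ*[X]} {k : ℕ}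
    (hfin : ∀ j ≤ k, (∀ i, 0 ≤ mk ((remSeq Q₁ Q₂ j).coeff i)) ∧
      mk (remSeq Q₁ Q₂ j).leadingCoeff ≤ 0) (d : ℝ[X]) :
    d ∣ stdPartPoly (remSeq Q₁ Q₂ k) ∧ d ∣ stdPartPoly (remSeq Q₁ Q₂ (k + 1)) ↔
      d ∣ stdPartPoly Q₁ ∧ d ∣ stdPartPoly Q₂ := by
  induction k with
  | zero => rfl
  | succ k ih =>
    obtain ⟨hfin₀, -⟩ := hfin k k.le_succ
    obtain ⟨hfin₁, hlc₁⟩ := hfin (k + 1) le_rfl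
    have hne : remSeq Q₁ Q₂ (k + 1) ≠ 0 := fun h => by simp [h] at hlc₁
    rw [remSeq_add_two hne, dvd_and_dvd_iff_of_eq_mul_add
      (stdPartPoly_eq_mul_div_add_mod hfin₀ hfin₁ hlc₁)]
    exact ih fun j hj => hfin j (hj.trans k.le_succ)

theorem st_pgcd_associate_gcd_general (P₁ P₂ : Polynomial ℝ)
    (Q₁ Q₂ : Polynomial ℝ*)
    (hdef₁ : ∀ i, Infinitesimal ((Q₁ - P₁.map realToHyper).coeff i))
    (hdef₂ : ∀ i, Infinitesimal ((Q₂ - P₂.map realToHyper).coeff i))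
    (k : ℕ)
    (hlast : ∀ i, Infinitesimal ((remSeq Q₁ Q₂ (k + 1)).coeff i))
    (hfin : ∀ j ≤ k, (∀ i, ¬Infinite ((remSeq Q₁ Q₂ j).coeff i)) ∧
      ¬Infinitesimal ((remSeq Q₁ Q₂ j).leadingCoeff))
    (S : Polynomial ℝ) (hS : ∀ i, S.coeff i = st ((remSeq Q₁ Q₂ k).coeff i)) :
    ∃ c : ℝ, c ≠ 0 ∧ S = c • EuclideanDomain.gcd P₁ P₂ := by
  simp only [infinitesimal_iff, infinite_iff, not_lt, st_eq] at hdef₁ hdef₂ hlast hfin hS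
  have hS : S = stdPartPoly (remSeq Q₁ Q₂ k) := ext hS
  have hcommon (d : ℝ[X]) : d ∣ S ↔ d ∣ P₁ ∧ d ∣ P₂ := by
    have h := dvd_stdPartPoly_remSeq_iff hfin d
    rwa [stdPartPoly_eq_zero hlast, ← hS, stdPartPoly_eq_of_mk_sub_pos coeRingHom hdef₁,
      stdPartPoly_eq_of_mk_sub_pos coeRingHom hdef₂, and_iff_left (dvd_zero d)] at h
  obtain ⟨hS₁, hS₂⟩ := (hcommon S).1 dvd_rfl
  refine exists_ne_zero_eq_smul_of_associated (associated_of_dvd_dvd ?_ ?_)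
  · exact (hcommon _).2 ⟨EuclideanDomain.gcd_dvd_left _ _, EuclideanDomain.gcd_dvd_right _ _⟩
  · exact EuclideanDomain.dvd_gcd hS₁ hS₂

/-- The standard part of the PGCD (the last remainder in the Euclidean algorithm for
deformations `Q₁, Q₂` not all of whose coefficients are infinitesimal) is a nonzero
real scalar multiple of `gcd(P₁, P₂)`. -/
theorem st_pgcd_associate_gcd (P₁ P₂ : Polynomial ℝ) (hP₁ : P₁ ≠ 0) (hP₂ : P₂ ≠ 0)
    (Q₁ Q₂ : Polynomial ℝ*)
    (hdeg₁ : Q₁.natDegree = P₁.natDegree) (hdeg₂ : Q₂.natDegree = P₂.natDegree)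
    (hdef₁ : ∀ i, Infinitesimal ((Q₁ - P₁.map realToHyper).coeff i))
    (hdef₂ : ∀ i, Infinitesimal ((Q₂ - P₂.map realToHyper).coeff i))
    (k : ℕ)
    (hlast : ∀ i, Infinitesimal ((remSeq Q₁ Q₂ (k + 1)).coeff i))
    (hnotinf : ∃ i, ¬Infinitesimal ((remSeq Q₁ Q₂ k).coeff i))
    (hfin : ∀ j ≤ k, (∀ i, ¬Infinite ((remSeq Q₁ Q₂ j).coeff i)) ∧
      ¬Infinitesimal ((remSeq Q₁ Q₂ j).leadingCoeff))
    (S : Polynomial ℝ) (hS : ∀ i, S.coeff i = st ((remSeq Q₁ Q₂ k).coeff i)) :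
    ∃ c : ℝ, c ≠ 0 ∧ S = c • EuclideanDomain.gcd P₁ P₂ :=
  st_pgcd_associate_gcd_general P₁ P₂ Q₁ Q₂ hdef₁ hdef₂ k hlast hfin S hS
end
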